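/- arXiv:2604.25340 — 3 statements merged into one kernel-verified Lean document; each statement's English description precedes it below -/
import Mathlib

section
/- Let Y, Z ∈ 𝒫^l_r and let n ∈ ℕ with n ≥ |Y|. If the vector Y + (n − |Y|)·e_1 ∈ ℤ^l dominates Z, then n ≥ |Z| and the vector Z^t + (n − |Z|)·e_1 ∈ ℤ^r dominates Y^t. -/
open Finset

/-- The conjugate partition: `(Yᵗ)_p = #{i : y_i ≥ p}` (0-based indexing). -/
def conjPart (l r : ℕ) (y : Fin l → ℤ) : Fin r → ℤ :=
  fun p => ((Finset.univ.filter (fun i : Fin l => ((p : ℕ) : ℤ) + 1 ≤ y i)).card : ℤ)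

/-- `v` dominates `w`: every prefix sum of `v` is at least that of `w`. -/
def Dominates {m : ℕ} (v w : Fin m → ℤ) : Prop :=
  ∀ k : Fin m, ∑ i ∈ Finset.univ.filter (fun i => i ≤ k), w i ≤
    ∑ i ∈ Finset.univ.filter (fun i => i ≤ k), v i

lemma card_filter_val_lt (m M : ℕ) :
    (univ.filter (fun p : Fin m => (p : ℕ) < M)).card = min M m := by
  have h2 : (univ.filter (fun p : Fin m => (p : ℕ) < M)).card
      = ((Finset.range m).filter (fun p => p < M)).card := by
    refine Finset.card_bij (fun p _ => (p : ℕ)) ?_ ?_ ?_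
    · intro a ha; simp only [mem_filter, mem_univ, true_and] at ha
      simp only [mem_filter, mem_range]; exact ⟨a.isLt, ha⟩
    · intro a ha b hb h; exact Fin.val_injective h
    · intro b hb; simp at hb; exact ⟨⟨b, hb.1⟩, by simp [hb.2], rfl⟩
  rw [h2]
  have h1 : ((Finset.range m).filter (fun p => p < M)) = Finset.range (min M m) := by
    ext p; simp; omega
  rw [h1, Finset.card_range]

lemma sum_add_single {m : ℕ} (h : 0 < m) (f : Fin m → ℤ) (c : ℤ) (S : Finset (Fin m))
    (h0 : (⟨0, h⟩ : Fin m) ∈ S) :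
    ∑ i ∈ S, ((f + c • Pi.single (⟨0, h⟩ : Fin m) (1:ℤ) : Fin m → ℤ)) i
      = (∑ i ∈ S, f i) + c := by
  simp only [Pi.add_apply, Finset.sum_add_distrib, Pi.smul_apply, smul_eq_mul]
  congr 1
  rw [← Finset.mul_sum, Finset.sum_pi_single', if_pos h0, mul_one]

lemma sum_conj (l r : ℕ) (y : Fin l → ℤ) (hb : ∀ i, 0 ≤ y i ∧ y i ≤ (r:ℤ)) (k : Fin r) :
    ∑ p ∈ univ.filter (fun p => p ≤ k), conjPart l r y p
      = ∑ i, min (y i) (((k : ℕ) : ℤ) + 1) := by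
  unfold conjPart
  have hc : ∀ p : Fin r, ((univ.filter (fun i : Fin l => ((p:ℕ):ℤ)+1 ≤ y i)).card : ℤ)
      = ∑ i : Fin l, if ((p:ℕ):ℤ)+1 ≤ y i then (1:ℤ) else 0 := by
    intro p; rw [Finset.card_filter]; push_cast; rfl
  simp_rw [hc]
  rw [Finset.sum_comm]
  refine Finset.sum_congr rfl fun i _ => ?_
  obtain ⟨h0, hr'⟩ := hb i
  set t := (y i).toNat with htdef
  have ht : (t : ℤ) = y i := Int.toNat_of_nonneg h0
  have htr : t ≤ r := by omega
  rw [Finset.sum_ite, Finset.sum_const_zero, add_zero, Finset.sum_const, Finset.filter_filter]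
  have hfe : (univ.filter (fun p : Fin r => p ≤ k ∧ ((p:ℕ):ℤ)+1 ≤ y i))
      = univ.filter (fun p : Fin r => (p : ℕ) < min ((k:ℕ)+1) t) := by
    ext p
    simp only [mem_filter, mem_univ, true_and, Fin.le_def]
    omega
  rw [hfe, card_filter_val_lt]
  have : min (min ((k:ℕ)+1) t) r = min ((k:ℕ)+1) t := by
    have := k.isLt; omega
  rw [this, nsmul_eq_mul, mul_one]
  push_cast
  omega

/-- Lemma reverse-dom-order (1): if `n ≥ |Y|` and `Y + (n − |Y|)·e₁`
dominates `Z`, then `n ≥ |Z|` and `Zᵗ + (n − |Z|)·e₁` dominates `Yᵗ`. -/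
theorem reverse_dom_order_one (l r : ℕ) (hl : 0 < l) (hr : 0 < r)
    (Y Z : Fin l → ℤ)
    (hYmono : ∀ i j : Fin l, i ≤ j → Y j ≤ Y i)
    (hYbound : ∀ i : Fin l, 0 ≤ Y i ∧ Y i ≤ (r : ℤ))
    (hZmono : ∀ i j : Fin l, i ≤ j → Z j ≤ Z i)
    (hZbound : ∀ i : Fin l, 0 ≤ Z i ∧ Z i ≤ (r : ℤ))
    (n : ℕ) (hn : (∑ i, Y i) ≤ (n : ℤ))
    (hdom : Dominates (Y + ((n : ℤ) - ∑ i, Y i) • Pi.single (⟨0, hl⟩ : Fin l) 1) Z) :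
    (∑ i, Z i) ≤ (n : ℤ) ∧
      Dominates
        (conjPart l r Z + ((n : ℤ) - ∑ i, Z i) • Pi.single (⟨0, hr⟩ : Fin r) 1)
        (conjPart l r Y) := by
  -- Part 1 : n ≥ |Z|
  have huniv : (univ.filter (fun i : Fin l => i ≤ (⟨l-1, by omega⟩ : Fin l))) = univ := by
    apply Finset.filter_true_of_mem
    intro i _
    rw [Fin.le_def]
    show (i : ℕ) ≤ l - 1
    have := i.isLt
    omega
  have h1 : (∑ i, Z i) ≤ (n : ℤ) := by
    have hd := hdom ⟨l-1, by omega⟩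
    rw [huniv, sum_add_single hl Y _ univ (mem_univ _)] at hd
    linarith
  refine ⟨h1, ?_⟩
  intro k
  have h0r : (⟨0, hr⟩ : Fin r) ∈ univ.filter (fun p : Fin r => p ≤ k) := by
    simp only [mem_filter, mem_univ, true_and, Fin.le_def]; omega
  rw [sum_add_single hr (conjPart l r Z) _ _ h0r, sum_conj l r Z hZbound k,
    sum_conj l r Y hYbound k]
  set K : ℤ := ((k : ℕ) : ℤ) + 1 with hK
  -- goal : ∑ min (Y i) K ≤ ∑ min (Z i) K + (n - ∑ Z)
  set s : ℕ := (univ.filter (fun i : Fin l => K < Z i)).card with hs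
  have hsl : s ≤ l := le_trans (Finset.card_filter_le _ _) (by simp)
  have hA : ∀ i : Fin l, (i : ℕ) < s → K < Z i := by
    intro i hi
    by_contra hcon
    push_neg at hcon
    have hsub : (univ.filter (fun j : Fin l => K < Z j))
        ⊆ univ.filter (fun j : Fin l => (j : ℕ) < (i : ℕ)) := by
      intro j hj
      simp only [mem_filter, mem_univ, true_and] at hj ⊢
      by_contra hji
      push_neg at hji
      have := hZmono i j (Fin.le_def.mpr hji)
      linarith
    have hcard := Finset.card_le_card hsub
    rw [card_filter_val_lt] at hcard
    have hil := i.isLt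
    omega
  have hB : ∀ i : Fin l, s ≤ (i : ℕ) → Z i ≤ K := by
    intro i hi
    by_contra hcon
    push_neg at hcon
    have hsub : univ.filter (fun j : Fin l => (j : ℕ) < (i : ℕ) + 1)
        ⊆ univ.filter (fun j : Fin l => K < Z j) := by
      intro j hj
      simp only [mem_filter, mem_univ, true_and] at hj ⊢
      have : Z i ≤ Z j := hZmono j i (Fin.le_def.mpr (by omega))
      linarith
    have hcard := Finset.card_le_card hsub
    rw [card_filter_val_lt] at hcard
    have hil := i.isLt
    omega
  have hmm : ∀ a : ℤ, a - min a K = max (a - K) 0 := by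
    intro a
    rcases le_total a K with h | h
    · rw [min_eq_left h, max_eq_right (by linarith)]; ring
    · rw [min_eq_right h, max_eq_left (by linarith)]
  have hcardP : (univ.filter (fun i : Fin l => (i : ℕ) < s)).card = s := by
    rw [card_filter_val_lt]; omega
  have hmaxZ : ∑ i, max (Z i - K) 0 = (∑ i ∈ univ.filter (fun i : Fin l => (i : ℕ) < s), Z i) - (s : ℤ) * K := by
    rw [← Finset.sum_filter_add_sum_filter_not univ (fun i : Fin l => (i : ℕ) < s) (fun i => max (Z i - K) 0)]
    have e1 : ∑ i ∈ univ.filter (fun i : Fin l => (i : ℕ) < s), max (Z i - K) 0 = ∑ i ∈ univ.filter (fun i : Fin l => (i : ℕ) < s), (Z i - K) := by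
      refine Finset.sum_congr rfl fun i hi => ?_
      simp only [mem_filter, mem_univ, true_and] at hi
      have := hA i hi
      exact max_eq_left (by linarith)
    have e2 : ∑ i ∈ univ.filter (fun i : Fin l => ¬ (i : ℕ) < s), max (Z i - K) 0 = 0 := by
      refine Finset.sum_eq_zero fun i hi => ?_
      simp only [mem_filter, mem_univ, true_and] at hi
      have := hB i (by omega)
      exact max_eq_right (by linarith)
    rw [e1, e2, add_zero, Finset.sum_sub_distrib, Finset.sum_const, hcardP, nsmul_eq_mul]
  have hsumsub : ∑ i, max (Z i - K) 0 = (∑ i, Z i) - ∑ i, min (Z i) K := by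
    rw [← Finset.sum_sub_distrib]
    exact (Finset.sum_congr rfl fun i _ => hmm (Z i)).symm
  -- key inequality : ∑ min (Y i) K + ∑ max (Z i - K) 0 ≤ n
  have key : (∑ i, min (Y i) K) + ∑ i, max (Z i - K) 0 ≤ (n : ℤ) := by
    rcases Nat.eq_zero_or_pos s with hs0 | hspos
    · have hz : ∑ i, max (Z i - K) 0 = 0 := by
        refine Finset.sum_eq_zero fun i _ => ?_
        have := hB i (by omega)
        exact max_eq_right (by linarith)
      have hy : (∑ i, min (Y i) K) ≤ ∑ i, Y i :=
        Finset.sum_le_sum fun i _ => min_le_left _ _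
      linarith
    · set k' : Fin l := ⟨s - 1, by omega⟩ with hk'
      have hfilter : univ.filter (fun i : Fin l => i ≤ k') = univ.filter (fun i : Fin l => (i : ℕ) < s) := by
        ext i
        simp only [mem_filter, mem_univ, true_and, Fin.le_def, hk']
        omega
      have h0P : (⟨0, hl⟩ : Fin l) ∈ univ.filter (fun i : Fin l => i ≤ k') := by
        simp only [mem_filter, mem_univ, true_and, Fin.le_def]; omega
      have hd := hdom k'
      rw [sum_add_single hl Y _ _ h0P, hfilter] at hd
      -- hd : ∑_{P} Z ≤ ∑_{P} Y + (n - ∑ Y)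
      have hsplitY := Finset.sum_filter_add_sum_filter_not univ (fun i : Fin l => (i : ℕ) < s) Y
      have hminY : (∑ i, min (Y i) K)
          ≤ (s : ℤ) * K + ∑ i ∈ univ.filter (fun i : Fin l => ¬ (i : ℕ) < s), Y i := by
        rw [← Finset.sum_filter_add_sum_filter_not univ (fun i : Fin l => (i : ℕ) < s) (fun i => min (Y i) K)]
        have b1 : ∑ i ∈ univ.filter (fun i : Fin l => (i : ℕ) < s), min (Y i) K ≤ (s : ℤ) * K := by
          calc ∑ i ∈ univ.filter (fun i : Fin l => (i : ℕ) < s), min (Y i) K ≤ ∑ _i ∈ univ.filter (fun i : Fin l => (i : ℕ) < s), K :=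
                Finset.sum_le_sum fun i _ => min_le_right _ _
            _ = (s : ℤ) * K := by rw [Finset.sum_const, hcardP, nsmul_eq_mul]
        have b2 : ∑ i ∈ univ.filter (fun i : Fin l => ¬ (i : ℕ) < s), min (Y i) K
            ≤ ∑ i ∈ univ.filter (fun i : Fin l => ¬ (i : ℕ) < s), Y i :=
          Finset.sum_le_sum fun i _ => min_le_left _ _
        linarith
      rw [hmaxZ]
      linarith
  linarith
end

section
/- Let l, r ≥ 1 be integers and let Y ∈ 𝒫^l_r. Then Σ_{i=1}^l y_i·(y_i + 2(l − i)) + Σ_{p=1}^r (Y^t)_p·((Y^t)_p + 2(r − p)) = (2l + 2r − 2)·|Y|. -/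
open Finset

-- helper 1: sum of ite over Fin m equals sum over initial segment
lemma sum_ite_fin {m : ℕ} (n : ℤ) (h0 : 0 ≤ n) (hm : n ≤ (m:ℤ)) (g : ℕ → ℤ) :
    ∑ p : Fin m, (if ((p:ℕ):ℤ) < n then g (p:ℕ) else 0)
      = ∑ p ∈ range n.toNat, g p := by
  rw [Fin.sum_univ_eq_sum_range (fun p => if (p:ℤ) < n then g p else 0)]
  rw [← Finset.sum_filter]
  congr 1
  ext a
  simp only [mem_filter, mem_range]
  omega

lemma count_fin {m : ℕ} (n : ℤ) (h0 : 0 ≤ n) (hm : n ≤ (m:ℤ)) :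
    ∑ p : Fin m, (if ((p:ℕ):ℤ) < n then (1:ℤ) else 0) = n := by
  rw [sum_ite_fin n h0 hm (fun _ => 1), Finset.sum_const, nsmul_eq_mul, card_range]
  omega

lemma square_fin {m : ℕ} (n c : ℤ) (h0 : 0 ≤ n) (hm : n ≤ (m:ℤ)) :
    ∑ p : Fin m, (if ((p:ℕ):ℤ) < n then (2*((p:ℕ):ℤ)+1+c) else 0) = n * (n + c) := by
  rw [sum_ite_fin n h0 hm (fun p => 2*(p:ℤ)+1+c)]
  have : ∀ t : ℕ, ∑ p ∈ range t, (2*(p:ℤ)+1+c) = (t:ℤ) * ((t:ℤ) + c) := by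
    intro t
    induction t with
    | zero => simp
    | succ k ih => rw [Finset.sum_range_succ, ih]; push_cast; ring
  rw [this]
  congr 1 <;> omega

lemma card_filter_lt (l k : ℕ) (hk : k ≤ l) :
    (Finset.univ.filter (fun j : Fin l => (j:ℕ) < k)).card = k := by
  have he : Finset.univ.filter (fun j : Fin l => (j:ℕ) < k)
      = (Finset.range k).attachFin (fun m hm => lt_of_lt_of_le (mem_range.mp hm) hk) := by
    ext j
    simp [Finset.mem_attachFin]
  rw [he, Finset.card_attachFin, card_range]


lemma conj_iff (l r : ℕ) (y : Fin l → ℤ)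
    (hmono : ∀ i j : Fin l, i ≤ j → y j ≤ y i) (i : Fin l) (p : Fin r) :
    (((p:ℕ):ℤ) < y i) ↔ ((i:ℕ):ℤ) < conjPart l r y p := by
  unfold conjPart
  constructor
  · intro h
    have hsub : (Finset.univ.filter (fun j : Fin l => (j:ℕ) < (i:ℕ)+1))
        ⊆ Finset.univ.filter (fun j : Fin l => ((p:ℕ):ℤ) + 1 ≤ y j) := by
      intro j hj
      simp only [mem_filter, mem_univ, true_and] at hj ⊢
      have : j ≤ i := by omega
      have := hmono j i this
      omega
    have hc := Finset.card_le_card hsub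
    rw [card_filter_lt l ((i:ℕ)+1) i.isLt] at hc
    push_cast
    omega
  · intro h
    by_contra hlt
    push_neg at hlt
    have hsub : (Finset.univ.filter (fun j : Fin l => ((p:ℕ):ℤ) + 1 ≤ y j))
        ⊆ Finset.univ.filter (fun j : Fin l => (j:ℕ) < (i:ℕ)) := by
      intro j hj
      simp only [mem_filter, mem_univ, true_and] at hj ⊢
      by_contra hji
      push_neg at hji
      have : j ≥ i := by exact Fin.le_def.mpr (by omega)
      have := hmono i j this
      omega
    have hc := Finset.card_le_card hsub
    rw [card_filter_lt l (i:ℕ) (le_of_lt i.isLt)] at hc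
    omega

/-- vacuum-anomaly identity for `(ŝo(2l), ŝo(2r))` at `h = 1/2`:
`∑_i y_i (y_i + 2(l − i)) + ∑_p (Yᵗ)_p ((Yᵗ)_p + 2(r − p)) = (2l + 2r − 2)|Y|`.
(Here `i`, `p` are 1-indexed in the natural-language statement; with 0-based `Fin`
indexing, `l − i` becomes `l − 1 − i`, etc.) -/
theorem vacuum_anomaly_half (l r : ℕ) (hl : 1 ≤ l) (hr : 1 ≤ r)
    (y : Fin l → ℤ)
    (hmono : ∀ i j : Fin l, i ≤ j → y j ≤ y i)
    (hbound : ∀ i : Fin l, 0 ≤ y i ∧ y i ≤ (r : ℤ)) :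
    (∑ i : Fin l, y i * (y i + 2 * ((l : ℤ) - 1 - ((i : ℕ) : ℤ)))) +
      (∑ p : Fin r, conjPart l r y p * (conjPart l r y p + 2 * ((r : ℤ) - 1 - ((p : ℕ) : ℤ)))) =
      (2 * (l : ℤ) + 2 * (r : ℤ) - 2) * ∑ i, y i := by
  have hc0 : ∀ p : Fin r, 0 ≤ conjPart l r y p := fun p => Int.ofNat_nonneg _
  have hcl : ∀ p : Fin r, conjPart l r y p ≤ (l:ℤ) := by
    intro p
    unfold conjPart
    have := Finset.card_filter_le (Finset.univ : Finset (Fin l))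
      (fun i : Fin l => ((p:ℕ):ℤ) + 1 ≤ y i)
    simp only [Finset.card_univ, Fintype.card_fin] at this
    exact_mod_cast this
  -- rewrite the first sum
  have h1 : ∀ i : Fin l, y i * (y i + 2 * ((l : ℤ) - 1 - ((i:ℕ):ℤ)))
      = ∑ p : Fin r, (if ((p:ℕ):ℤ) < y i then (2*((p:ℕ):ℤ)+1+2*((l:ℤ)-1-((i:ℕ):ℤ))) else 0) := by
    intro i
    rw [square_fin (y i) _ (hbound i).1 (hbound i).2]
  -- rewrite the second sum
  have h2 : ∀ p : Fin r, conjPart l r y p * (conjPart l r y p + 2 * ((r:ℤ) - 1 - ((p:ℕ):ℤ)))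
      = ∑ i : Fin l, (if ((p:ℕ):ℤ) < y i then (2*((i:ℕ):ℤ)+1+2*((r:ℤ)-1-((p:ℕ):ℤ))) else 0) := by
    intro p
    rw [← square_fin (conjPart l r y p) _ (hc0 p) (hcl p)]
    refine Finset.sum_congr rfl (fun i _ => ?_)
    simp only [conj_iff l r y hmono i p]
  simp_rw [h1, h2]
  rw [Finset.sum_comm (s := (univ : Finset (Fin r))) (t := (univ : Finset (Fin l)))]
  rw [← Finset.sum_add_distrib]
  rw [Finset.mul_sum]
  refine Finset.sum_congr rfl (fun i _ => ?_)
  rw [← Finset.sum_add_distrib]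
  trans ∑ p : Fin r, (2*(l:ℤ)+2*(r:ℤ)-2) * (if ((p:ℕ):ℤ) < y i then (1:ℤ) else 0)
  · refine Finset.sum_congr rfl (fun p _ => ?_)
    by_cases h : ((p:ℕ):ℤ) < y i <;> simp [h] <;> ring
  · rw [← Finset.mul_sum, count_fin (y i) (hbound i).1 (hbound i).2]
end

section
/- Let l, r ≥ 1 be integers and let Y ∈ 𝒫^l_r. Then Σ_{i=1}^l (Y^c)_i·((Y^c)_i + 2(l − i)) + Σ_{p=1}^r (Y^t)_p·((Y^t)_p + 2(r − p)) = l·r·(l + r − 1), where (Y^c)_i = r − y_{l+1−i}. -/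
open Finset

lemma finSumIte {M : Type*} [AddCommMonoid M] (l m : ℕ) (hm : m ≤ l) (f : ℕ → M) :
    ∑ i : Fin l, (if (i : ℕ) < m then f i else 0) = ∑ i ∈ range m, f i := by
  rw [Fin.sum_univ_eq_sum_range (fun k => if k < m then f k else 0) l, ← Finset.sum_filter]
  congr 1
  ext k
  simp only [mem_filter, mem_range]
  omega

lemma cardFilterLt (l m : ℕ) (hm : m ≤ l) :
    (univ.filter (fun i : Fin l => (i : ℕ) < m)).card = m := by
  rw [Finset.card_filter, finSumIte l m hm (fun _ => 1)]
  simp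

lemma sumOdd (m : ℕ) : ∑ p ∈ range m, (2*(p:ℤ)+1) = (m:ℤ)^2 := by
  induction m with
  | zero => simp
  | succ n ih => rw [Finset.sum_range_succ, ih]; push_cast; ring

lemma sumFinId (l : ℕ) : (∑ i : Fin l, ((i:ℕ):ℤ)) * 2 = (l:ℤ)*l - l := by
  rw [Fin.sum_univ_eq_sum_range (fun k => ((k:ℤ))) l]
  have h := sumOdd l
  rw [Finset.sum_add_distrib, ← Finset.mul_sum, Finset.sum_const, Finset.card_range] at h
  rw [nsmul_eq_mul] at h
  nlinarith [h]

lemma downwardClosed_filter (l : ℕ) (P : Fin l → Prop) [DecidablePred P]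
    (hP : ∀ i j : Fin l, i ≤ j → P j → P i) :
    univ.filter P = univ.filter (fun i : Fin l => (i : ℕ) < (univ.filter P).card) := by
  ext i
  simp only [mem_filter, mem_univ, true_and]
  constructor
  · intro hi
    have hsub : univ.filter (fun j : Fin l => (j:ℕ) < (i:ℕ)+1) ⊆ univ.filter P := by
      intro j hj
      simp only [mem_filter, mem_univ, true_and] at hj ⊢
      exact hP j i (Fin.le_def.mpr (by omega)) hi
    have h1 := Finset.card_le_card hsub
    rw [cardFilterLt l ((i:ℕ)+1) i.isLt] at h1
    omega
  · intro hi
    by_contra hPi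
    have hsub : univ.filter P ⊆ univ.filter (fun j : Fin l => (j:ℕ) < (i:ℕ)) := by
      intro j hj
      simp only [mem_filter, mem_univ, true_and] at hj ⊢
      by_contra h
      exact hPi (hP i j (Fin.le_def.mpr (by omega)) hj)
    have h1 := Finset.card_le_card hsub
    rw [cardFilterLt l (i:ℕ) (le_of_lt i.isLt)] at h1
    omega

/-- The complement `Y^c = (r − y_l, …, r − y_1)` of a partition `Y ∈ 𝒫^l_r`,
so `(Y^c)_i = r − y_{l+1−i}`. -/
def complPart (l r : ℕ) (y : Fin l → ℤ) : Fin l → ℤ :=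
  fun i => (r : ℤ) - y i.rev

/-- vacuum-anomaly identity for `(ŝo(2l), ŝo(2r))` at `h = 0`:
`∑_i (Y^c)_i ((Y^c)_i + 2(l − i)) + ∑_p (Yᵗ)_p ((Yᵗ)_p + 2(r − p)) = l·r·(l + r − 1)`. -/
theorem vacuum_anomaly_zero (l r : ℕ) (hl : 1 ≤ l) (hr : 1 ≤ r)
    (y : Fin l → ℤ)
    (hmono : ∀ i j : Fin l, i ≤ j → y j ≤ y i)
    (hbound : ∀ i : Fin l, 0 ≤ y i ∧ y i ≤ (r : ℤ)) :
    (∑ i : Fin l,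
        complPart l r y i * (complPart l r y i + 2 * ((l : ℤ) - 1 - ((i : ℕ) : ℤ)))) +
      (∑ p : Fin r,
        conjPart l r y p * (conjPart l r y p + 2 * ((r : ℤ) - 1 - ((p : ℕ) : ℤ)))) =
      (l : ℤ) * (r : ℤ) * ((l : ℤ) + (r : ℤ) - 1) := by
  -- double counting
  have key : ∀ f g : ℕ → ℤ,
      ∑ i : Fin l, f (i:ℕ) * (∑ p ∈ range (y i).toNat, g p)
        = ∑ p : Fin r, g (p:ℕ) *
            (∑ i ∈ univ.filter (fun i : Fin l => ((p:ℕ):ℤ)+1 ≤ y i), f (i:ℕ)) := by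
    intro f g
    have h1 : ∀ i : Fin l,
        f (i:ℕ) * (∑ p ∈ range (y i).toNat, g p)
          = ∑ p : Fin r, (if ((p:ℕ):ℤ)+1 ≤ y i then f (i:ℕ) * g (p:ℕ) else 0) := by
      intro i
      have hm : (y i).toNat ≤ r := Int.toNat_le.mpr (hbound i).2
      rw [Finset.mul_sum, ← finSumIte r (y i).toNat hm (fun p => f (i:ℕ) * g p)]
      refine Finset.sum_congr rfl fun p _ => ?_
      have hiff : ((p:ℕ) < (y i).toNat) ↔ (((p:ℕ):ℤ)+1 ≤ y i) := by
        rw [Int.lt_toNat]; omega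
      simp only [hiff]
    calc ∑ i : Fin l, f (i:ℕ) * (∑ p ∈ range (y i).toNat, g p)
        = ∑ i : Fin l, ∑ p : Fin r, (if ((p:ℕ):ℤ)+1 ≤ y i then f (i:ℕ) * g (p:ℕ) else 0) :=
          Finset.sum_congr rfl fun i _ => h1 i
      _ = ∑ p : Fin r, ∑ i : Fin l, (if ((p:ℕ):ℤ)+1 ≤ y i then f (i:ℕ) * g (p:ℕ) else 0) :=
          Finset.sum_comm
      _ = ∑ p : Fin r, g (p:ℕ) *
            (∑ i ∈ univ.filter (fun i : Fin l => ((p:ℕ):ℤ)+1 ≤ y i), f (i:ℕ)) := by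
          refine Finset.sum_congr rfl fun p _ => ?_
          rw [Finset.mul_sum, Finset.sum_filter]
          refine Finset.sum_congr rfl fun i _ => ?_
          split <;> ring
  have hyt : ∀ i : Fin l, (((y i).toNat : ℤ)) = y i := fun i => Int.toNat_of_nonneg (hbound i).1
  -- S1
  have S1 : ∑ i : Fin l, y i = ∑ p : Fin r, conjPart l r y p := by
    have h := key (fun _ => 1) (fun _ => 1)
    simp only [one_mul, Finset.sum_const, Finset.card_range, nsmul_eq_mul, mul_one] at h
    calc ∑ i : Fin l, y i = ∑ i : Fin l, (((y i).toNat : ℤ)) :=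
          Finset.sum_congr rfl fun i _ => (hyt i).symm
      _ = ∑ p : Fin r, ((univ.filter (fun i : Fin l => ((p:ℕ):ℤ)+1 ≤ y i)).card : ℤ) := by
          rw [h]
      _ = ∑ p : Fin r, conjPart l r y p := rfl
  -- S2
  have S2 : ∑ i : Fin l, y i * y i
      = ∑ p : Fin r, (2*((p:ℕ):ℤ)+1) * conjPart l r y p := by
    have h := key (fun _ => 1) (fun p => 2*(p:ℤ)+1)
    simp only [one_mul, sumOdd, Finset.sum_const, nsmul_eq_mul, mul_one] at h
    calc ∑ i : Fin l, y i * y i = ∑ i : Fin l, (((y i).toNat : ℤ))^2 := by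
          refine Finset.sum_congr rfl fun i _ => ?_; rw [hyt i]; ring
      _ = ∑ p : Fin r, (2*((p:ℕ):ℤ)+1) * conjPart l r y p := by rw [h]; rfl
  -- S3
  have S3 : ∑ p : Fin r, conjPart l r y p * conjPart l r y p
      = 2 * (∑ i : Fin l, ((i:ℕ):ℤ) * y i) + ∑ i : Fin l, y i := by
    have h := key (fun i => 2*(i:ℤ)+1) (fun _ => 1)
    simp only [one_mul, Finset.sum_const, Finset.card_range, nsmul_eq_mul, mul_one] at h
    have hcol : ∀ p : Fin r,
        ∑ i ∈ univ.filter (fun i : Fin l => ((p:ℕ):ℤ)+1 ≤ y i), (2*((i:ℕ):ℤ)+1)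
          = conjPart l r y p * conjPart l r y p := by
      intro p
      have hP : ∀ i j : Fin l, i ≤ j → (((p:ℕ):ℤ)+1 ≤ y j) → (((p:ℕ):ℤ)+1 ≤ y i) :=
        fun i j hij hj => le_trans hj (hmono i j hij)
      rw [downwardClosed_filter l _ hP, Finset.sum_filter,
        finSumIte l _ ((Finset.card_filter_le univ _).trans (le_of_eq (by simp)))
          (fun k => 2*(k:ℤ)+1), sumOdd]
      simp only [conjPart]
      ring
    calc ∑ p : Fin r, conjPart l r y p * conjPart l r y p
        = ∑ p : Fin r, ∑ i ∈ univ.filter (fun i : Fin l => ((p:ℕ):ℤ)+1 ≤ y i), (2*((i:ℕ):ℤ)+1) :=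
          Finset.sum_congr rfl fun p _ => (hcol p).symm
      _ = ∑ i : Fin l, (2*((i:ℕ):ℤ)+1) * (((y i).toNat : ℤ)) := h.symm
      _ = ∑ i : Fin l, (2*(((i:ℕ):ℤ) * y i) + y i) := by
          refine Finset.sum_congr rfl fun i _ => ?_
          rw [hyt i]; ring
      _ = 2 * (∑ i : Fin l, ((i:ℕ):ℤ) * y i) + ∑ i : Fin l, y i := by
          rw [Finset.sum_add_distrib, ← Finset.mul_sum]
  -- S2 in distributed form
  have S2' : ∑ i : Fin l, y i * y i
      = 2*(∑ p : Fin r, ((p:ℕ):ℤ) * conjPart l r y p) + ∑ p : Fin r, conjPart l r y p := by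
    rw [S2, Finset.sum_congr rfl fun (p : Fin r) (_ : p ∈ univ) =>
      (by ring : (2*((p:ℕ):ℤ)+1) * conjPart l r y p
        = 2*(((p:ℕ):ℤ) * conjPart l r y p) + conjPart l r y p),
      Finset.sum_add_distrib, ← Finset.mul_sum]
  -- reindex the complement sum
  have hrev : (∑ i : Fin l,
        complPart l r y i * (complPart l r y i + 2 * ((l : ℤ) - 1 - ((i : ℕ) : ℤ))))
      = ∑ j : Fin l, ((r:ℤ) - y j) * (((r:ℤ) - y j) + 2*((j:ℕ):ℤ)) := by
    refine (Fintype.sum_equiv (Fin.revPerm) _ _ ?_).symm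
    intro j
    have hj := j.isLt
    have h1 : complPart l r y (Fin.revPerm j) = (r:ℤ) - y j := by
      simp [complPart, Fin.rev_rev]
    have h2 : (((Fin.revPerm j : Fin l) : ℕ) : ℤ) = (l:ℤ) - 1 - ((j:ℕ):ℤ) := by
      simp only [Fin.revPerm_apply, Fin.val_rev]
      omega
    rw [h1, h2]; ring
  -- expand both sums
  have hX : ∑ j : Fin l, ((r:ℤ) - y j) * (((r:ℤ) - y j) + 2*((j:ℕ):ℤ))
      = (l:ℤ)*((r:ℤ)*(r:ℤ)) + 2*(r:ℤ)*(∑ j : Fin l, ((j:ℕ):ℤ))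
        - 2*(r:ℤ)*(∑ j : Fin l, y j) - 2*(∑ j : Fin l, ((j:ℕ):ℤ) * y j)
        + ∑ j : Fin l, y j * y j := by
    rw [Finset.sum_congr rfl fun j (_ : j ∈ univ) =>
      (by ring : ((r:ℤ) - y j) * (((r:ℤ) - y j) + 2*((j:ℕ):ℤ))
        = (r:ℤ)*(r:ℤ) + 2*(r:ℤ)*((j:ℕ):ℤ) - 2*(r:ℤ)*(y j)
          - 2*(((j:ℕ):ℤ) * y j) + y j * y j)]
    simp only [Finset.sum_add_distrib, Finset.sum_sub_distrib, ← Finset.mul_sum,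
      Finset.sum_const, Finset.card_univ, Fintype.card_fin, nsmul_eq_mul]
    ring
  have hZ : ∑ p : Fin r, conjPart l r y p * (conjPart l r y p + 2 * ((r:ℤ) - 1 - ((p:ℕ):ℤ)))
      = (∑ p : Fin r, conjPart l r y p * conjPart l r y p)
        + 2*((r:ℤ)-1)*(∑ p : Fin r, conjPart l r y p)
        - 2*(∑ p : Fin r, ((p:ℕ):ℤ) * conjPart l r y p) := by
    rw [Finset.sum_congr rfl fun (p : Fin r) (_ : p ∈ univ) =>
      (by ring : conjPart l r y p * (conjPart l r y p + 2 * ((r:ℤ) - 1 - ((p:ℕ):ℤ)))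
        = conjPart l r y p * conjPart l r y p + 2*((r:ℤ)-1)*conjPart l r y p
          - 2*(((p:ℕ):ℤ) * conjPart l r y p))]
    simp only [Finset.sum_add_distrib, Finset.sum_sub_distrib, ← Finset.mul_sum]
  rw [hrev, hX, hZ]
  linear_combination S2' + S3 - (2*(r:ℤ)-1)*S1 + (r:ℤ)*(sumFinId l)
end
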